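/- Consider the randomized greedy freezing procedure with parameter p′ ∈ (0,1) in the CSP setting, and suppose ℙ[C] ≤ p for every C ∈ 𝒞. Let T ⊆ 𝒞 be a collection of constraints such that vbl(C) ∩ vbl(C′) = ∅ for all distinct C, C′ ∈ T. Then E_ν[ ∏_{C∈T} ℙ[C | P_s] ] ≤ p^{|T|}. -/

import Mathlib

open Finset
open scoped Classical

/-! ## The CSP setting

A constraint satisfaction problem has variables `Fin n`, each taking values in `Fin q`
(the uniform product measure `ℙ` makes the variables independent and uniform), and
constraints `Fin m`; constraint `j` depends only on the variables in `vbl j`, and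
`viol j σ` means that the assignment `σ` violates constraint `j`. -/

/-- A full assignment `σ` is compatible with (extends) the partial assignment `X`. -/
def Compat {n q : ℕ} (X : Fin n → Option (Fin q)) (σ : Fin n → Fin q) : Prop :=
  ∀ v a, X v = some a → σ v = a

/-- `condP viol j X` is the conditional probability `ℙ[C_j | X]` that constraint `j` is
violated, under the uniform product measure conditioned on agreeing with the partial
assignment `X`. -/
noncomputable def condP {n q m : ℕ} (viol : Fin m → (Fin n → Fin q) → Prop)
    (j : Fin m) (X : Fin n → Option (Fin q)) : ℝ :=
  ((Finset.univ.filter fun σ : Fin n → Fin q => Compat X σ ∧ viol j σ).card : ℝ) /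
    ((Finset.univ.filter fun σ : Fin n → Fin q => Compat X σ).card : ℝ)

/-- One step of the greedy freezing procedure, processing variable `i`, where the random
seed `ω` prescribes the value a variable receives when it is assigned. The state is a pair
(partial assignment, set of frozen variables). If `i` is frozen it is skipped; otherwise
`i` is assigned the value `ω i`, and every still-unassigned variable lying in a constraint
that has become dangerous (conditional probability of violation exceeding `p'`) is frozen. -/
noncomputable def greedyStep {n q m : ℕ} (vbl : Fin m → Finset (Fin n))
    (viol : Fin m → (Fin n → Fin q) → Prop) (p' : ℝ) (ω : Fin n → Fin q)
    (st : (Fin n → Option (Fin q)) × Finset (Fin n)) (i : Fin n) :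
    (Fin n → Option (Fin q)) × Finset (Fin n) :=
  if i ∈ st.2 then st
  else
    let X' := Function.update st.1 i (some (ω i))
    (X', st.2 ∪ Finset.univ.filter fun v =>
      X' v = none ∧ ∃ j, v ∈ vbl j ∧ p' < condP viol j X')

/-- `greedyRun vbl viol p' ω h` is the state of the greedy freezing procedure with
parameter `p'` and random seed `ω` after the variables `v_1, …, v_h` (i.e. the first `h`
variables in the fixed order) have been processed: since the procedure always selects the
lowest-indexed available variable, processing the variables in index order — skipping
frozen ones — implements the procedure exactly, and the first component of
`greedyRun vbl viol p' ω h` is the partial assignment `P_{ι(h)}`, where `ι(h)` is the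
number of variables among `v_1, …, v_h` that have been assigned values.
In particular `greedyRun vbl viol p' ω n` gives the final partial assignment `P_s`, and
as `ω` ranges uniformly over `Fin n → Fin q`, its law is the distribution `ν`. -/
noncomputable def greedyRun {n q m : ℕ} (vbl : Fin m → Finset (Fin n))
    (viol : Fin m → (Fin n → Fin q) → Prop) (p' : ℝ) (ω : Fin n → Fin q) :
    ℕ → (Fin n → Option (Fin q)) × Finset (Fin n)
  | 0 => (fun _ => none, ∅)
  | h + 1 =>
    if hh : h < n then greedyStep vbl viol p' ω (greedyRun vbl viol p' ω h) ⟨h, hh⟩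
    else greedyRun vbl viol p' ω h

/-!
The expected product is a martingale along the procedure. When a variable `v` receives a uniform
value, at most one constraint of `T` contains `v` because their variable sets are disjoint; the
other factors do not change, and the factor of that constraint averages back to its current value
(law of total probability). Skipping a frozen variable changes nothing. Hence the expectation stays
equal to `∏_{C ∈ T} ℙ[C] ≤ p ^ |T|`.
-/

open Function

section Fibers

variable {ι α : Type*} [DecidableEq ι] [Fintype α]

theorem card_mul_card_filter_apply_eq [DecidableEq α] (S : Finset (ι → α)) (v : ι)
    (hS : ∀ σ ∈ S, ∀ b, update σ v b ∈ S) (a : α) :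
    Fintype.card α * #(S.filter fun σ => σ v = a) = #S := by
  have hfiber : ∀ b, #(S.filter fun σ => σ v = b) = #(S.filter fun σ => σ v = a) := by
    intro b
    refine card_bij' (fun σ _ => update σ v a) (fun σ _ => update σ v b) ?_ ?_ ?_ ?_
    · intro σ hσ
      rw [mem_filter] at hσ ⊢
      exact ⟨hS σ hσ.1 a, update_self ..⟩
    · intro σ hσ
      rw [mem_filter] at hσ ⊢
      exact ⟨hS σ hσ.1 b, update_self ..⟩
    · intro σ hσ
      rw [update_idem, ← (mem_filter.mp hσ).2, update_eq_self]
    · intro σ hσ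
      rw [update_idem, ← (mem_filter.mp hσ).2, update_eq_self]
  calc Fintype.card α * #(S.filter fun σ => σ v = a) = ∑ b, #(S.filter fun σ => σ v = b) := by
        simp only [hfiber, sum_const, card_univ, smul_eq_mul]
    _ = #S := (card_eq_sum_card_fiberwise fun _ _ => mem_univ _).symm

variable [Fintype ι]

theorem sum_sum_update (f : (ι → α) → ℝ) (i : ι) :
    ∑ ω, ∑ a, f (update ω i a) = Fintype.card α * ∑ ω, f ω := by
  have hinv : Involutive fun x : (ι → α) × α => (update x.1 i x.2, x.1 i) := by
    rintro ⟨ω, a⟩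
    simp [update_idem]
  calc ∑ ω, ∑ a, f (update ω i a) = ∑ x : (ι → α) × α, f (hinv.toPerm _ x).1 :=
        (Fintype.sum_prod_type' _).symm
    _ = ∑ x : (ι → α) × α, f x.1 := Equiv.sum_comp _ fun x : (ι → α) × α => f x.1
    _ = Fintype.card α * ∑ ω, f ω := by
        rw [Fintype.sum_prod_type, mul_sum]
        simp only [sum_const, card_univ, nsmul_eq_mul]

end Fibers

section Conditioning

variable {n q m : ℕ} {X : Fin n → Option (Fin q)} {v : Fin n}

theorem compat_update_iff (hv : X v = none) (a : Fin q) (σ : Fin n → Fin q) :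
    Compat (update X v (some a)) σ ↔ Compat X σ ∧ σ v = a := by
  constructor
  · intro h
    refine ⟨fun w b hw => h w b ?_, h v a (update_self ..)⟩
    rwa [update_of_ne (by rintro rfl; simp [hv] at hw)]
  · rintro ⟨hX, rfl⟩ w b hw
    rcases eq_or_ne w v with rfl | hne
    · simpa using hw
    · exact hX w b (by rwa [update_of_ne hne] at hw)

theorem Compat.update (hv : X v = none) {σ : Fin n → Fin q} (h : Compat X σ) (b : Fin q) :
    Compat X (update σ v b) := by
  intro w c hw
  rw [update_of_ne (by rintro rfl; simp [hv] at hw)]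
  exact h w c hw

theorem filter_compat_update (hv : X v = none) (P : (Fin n → Fin q) → Prop) (a : Fin q) :
    univ.filter (fun σ => Compat (update X v (some a)) σ ∧ P σ)
      = (univ.filter fun σ => Compat X σ ∧ P σ).filter fun σ => σ v = a := by
  ext σ
  simp only [mem_filter, mem_univ, true_and, compat_update_iff hv]
  tauto

theorem sum_card_filter_compat_update (hv : X v = none) (P : (Fin n → Fin q) → Prop) :
    ∑ a, #(univ.filter fun σ => Compat (update X v (some a)) σ ∧ P σ)
      = #(univ.filter fun σ => Compat X σ ∧ P σ) := by
  simp only [filter_compat_update hv]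
  exact (card_eq_sum_card_fiberwise fun _ _ => mem_univ _).symm

theorem card_mul_card_filter_compat_update (hv : X v = none) {P : (Fin n → Fin q) → Prop}
    (hP : ∀ σ b, P σ → P (update σ v b)) (a : Fin q) :
    (q : ℝ) * #(univ.filter fun σ => Compat (update X v (some a)) σ ∧ P σ)
      = #(univ.filter fun σ => Compat X σ ∧ P σ) := by
  have hclosed : ∀ σ ∈ univ.filter (fun σ => Compat X σ ∧ P σ), ∀ b,
      update σ v b ∈ univ.filter (fun σ => Compat X σ ∧ P σ) := by
    intro σ hσ b
    simp only [mem_filter, mem_univ, true_and] at hσ ⊢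
    exact ⟨hσ.1.update hv b, hP σ b hσ.2⟩
  have hcount := card_mul_card_filter_apply_eq _ v hclosed a
  rw [Fintype.card_fin] at hcount
  rw [filter_compat_update hv]
  exact_mod_cast hcount

theorem card_mul_card_compat_update (hv : X v = none) (a : Fin q) :
    (q : ℝ) * #(univ.filter fun σ => Compat (update X v (some a)) σ)
      = #(univ.filter fun σ => Compat X σ) := by
  simpa only [and_true] using
    card_mul_card_filter_compat_update hv (P := fun _ => True) (fun _ _ h => h) a

variable (viol : Fin m → (Fin n → Fin q) → Prop) (j : Fin m)

theorem condP_nonneg (X : Fin n → Option (Fin q)) : 0 ≤ condP viol j X := by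
  unfold condP
  positivity

theorem condP_update_of_invariant (hq : q ≠ 0) (hv : X v = none)
    (hj : ∀ σ b, viol j σ → viol j (update σ v b)) (a : Fin q) :
    condP viol j (update X v (some a)) = condP viol j X := by
  unfold condP
  rw [← card_mul_card_filter_compat_update hv hj a, ← card_mul_card_compat_update hv a,
    mul_div_mul_left _ _ (Nat.cast_ne_zero.mpr hq)]

theorem sum_condP_update (hq : q ≠ 0) (hv : X v = none) :
    ∑ a, condP viol j (update X v (some a)) = q * condP viol j X := by
  have hden : ∀ a : Fin q, (#(univ.filter fun σ => Compat (update X v (some a)) σ) : ℝ)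
      = #(univ.filter fun σ => Compat X σ) / q := fun a => by
    rw [← card_mul_card_compat_update hv a, mul_div_cancel_left₀ _ (Nat.cast_ne_zero.mpr hq)]
  simp only [condP, hden, ← sum_div, ← Nat.cast_sum, sum_card_filter_compat_update hv]
  rw [div_div_eq_mul_div, mul_comm, mul_div_assoc]

end Conditioning

section Product

variable {n q m : ℕ} (vbl : Fin m → Finset (Fin n)) (viol : Fin m → (Fin n → Fin q) → Prop)

theorem viol_update_of_notMem
    (hdep : ∀ j (σ τ : Fin n → Fin q), (∀ v ∈ vbl j, σ v = τ v) → (viol j σ ↔ viol j τ))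
    {j : Fin m} {v : Fin n} (hv : v ∉ vbl j) (σ : Fin n → Fin q) (b : Fin q) (h : viol j σ) :
    viol j (update σ v b) :=
  (hdep j σ _ fun _ hw => (update_of_ne (ne_of_mem_of_not_mem hw hv) b σ).symm).mp h

theorem sum_prod_condP_update (hq : q ≠ 0)
    (hdep : ∀ j (σ τ : Fin n → Fin q), (∀ v ∈ vbl j, σ v = τ v) → (viol j σ ↔ viol j τ))
    {T : Finset (Fin m)} (hT : ∀ C ∈ T, ∀ C' ∈ T, C ≠ C' → Disjoint (vbl C) (vbl C'))
    {X : Fin n → Option (Fin q)} {v : Fin n} (hv : X v = none) :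
    ∑ a, ∏ C ∈ T, condP viol C (update X v (some a)) = q * ∏ C ∈ T, condP viol C X := by
  have hfixed : ∀ C, v ∉ vbl C → ∀ a, condP viol C (update X v (some a)) = condP viol C X :=
    fun C hC => condP_update_of_invariant viol C hq hv (viol_update_of_notMem vbl viol hdep hC)
  by_cases hex : ∃ C₀ ∈ T, v ∈ vbl C₀
  · obtain ⟨C₀, hC₀, hvC₀⟩ := hex
    have hrest : ∀ a, ∀ C ∈ T.erase C₀, condP viol C (update X v (some a)) = condP viol C X := by
      intro a C hC
      obtain ⟨hne, hCT⟩ := mem_erase.mp hC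
      exact hfixed C (disjoint_right.mp (hT C hCT C₀ hC₀ hne) hvC₀) a
    simp only [← mul_prod_erase T _ hC₀, prod_congr rfl (hrest _), ← sum_mul,
      sum_condP_update viol C₀ hq hv, mul_assoc]
  · push Not at hex
    simp only [prod_congr rfl fun C hC => hfixed C (hex C hC) _, sum_const, card_univ,
      Fintype.card_fin, nsmul_eq_mul]

end Product

section Greedy

variable {n q m : ℕ} (vbl : Fin m → Finset (Fin n)) (viol : Fin m → (Fin n → Fin q) → Prop)
  (p' : ℝ)

theorem greedyStep_fst (ω : Fin n → Fin q) (st : (Fin n → Option (Fin q)) × Finset (Fin n))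
    (i : Fin n) :
    (greedyStep vbl viol p' ω st i).1
      = if i ∈ st.2 then st.1 else update st.1 i (some (ω i)) := by
  unfold greedyStep
  split_ifs <;> rfl

theorem greedyStep_congr {ω ω' : Fin n → Fin q} {i : Fin n} (h : ω i = ω' i)
    (st : (Fin n → Option (Fin q)) × Finset (Fin n)) :
    greedyStep vbl viol p' ω st i = greedyStep vbl viol p' ω' st i := by
  unfold greedyStep
  rw [h]

theorem greedyRun_succ_of_lt (ω : Fin n → Fin q) {h : ℕ} (hh : h < n) :
    greedyRun vbl viol p' ω (h + 1) = greedyStep vbl viol p' ω (greedyRun vbl viol p' ω h) ⟨h, hh⟩ :=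
  dif_pos hh

theorem greedyRun_succ_of_le (ω : Fin n → Fin q) {h : ℕ} (hh : n ≤ h) :
    greedyRun vbl viol p' ω (h + 1) = greedyRun vbl viol p' ω h :=
  dif_neg hh.not_gt

theorem greedyRun_congr {ω ω' : Fin n → Fin q} :
    ∀ {h : ℕ}, (∀ v : Fin n, (v : ℕ) < h → ω v = ω' v) →
      greedyRun vbl viol p' ω h = greedyRun vbl viol p' ω' h
  | 0, _ => rfl
  | h + 1, hω => by
    have ih := greedyRun_congr (h := h) fun v hv => hω v (Nat.lt_succ_of_lt hv)
    rcases lt_or_ge h n with hh | hh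
    · rw [greedyRun_succ_of_lt _ _ _ _ hh, greedyRun_succ_of_lt _ _ _ _ hh, ih,
        greedyStep_congr _ _ _ (hω ⟨h, hh⟩ (Nat.lt_succ_self h))]
    · rw [greedyRun_succ_of_le _ _ _ _ hh, greedyRun_succ_of_le _ _ _ _ hh, ih]

theorem greedyRun_fst_eq_none (ω : Fin n → Fin q) :
    ∀ {h : ℕ} {v : Fin n}, h ≤ v → (greedyRun vbl viol p' ω h).1 v = none
  | 0, _, _ => rfl
  | h + 1, v, hv => by
    have ih := greedyRun_fst_eq_none ω (h := h) (v := v) (Nat.le_of_succ_le hv)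
    rcases lt_or_ge h n with hh | hh
    · rw [greedyRun_succ_of_lt _ _ _ _ hh, greedyStep_fst]
      split_ifs
      · exact ih
      · rwa [update_of_ne (Fin.ne_of_gt hv)]
    · rwa [greedyRun_succ_of_le _ _ _ _ hh]

theorem sum_prod_condP_greedyStep (hq : q ≠ 0)
    (hdep : ∀ j (σ τ : Fin n → Fin q), (∀ v ∈ vbl j, σ v = τ v) → (viol j σ ↔ viol j τ))
    {T : Finset (Fin m)} (hT : ∀ C ∈ T, ∀ C' ∈ T, C ≠ C' → Disjoint (vbl C) (vbl C'))
    {st : (Fin n → Option (Fin q)) × Finset (Fin n)} {i : Fin n} (hi : st.1 i = none)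
    (ω : Fin n → Fin q) :
    ∑ a, ∏ C ∈ T, condP viol C (greedyStep vbl viol p' (update ω i a) st i).1
      = q * ∏ C ∈ T, condP viol C st.1 := by
  simp only [greedyStep_fst, update_self]
  split_ifs
  · rw [sum_const, card_univ, Fintype.card_fin, nsmul_eq_mul]
  · exact sum_prod_condP_update vbl viol hq hdep hT hi

theorem sum_prod_condP_greedyRun_succ (hq : q ≠ 0)
    (hdep : ∀ j (σ τ : Fin n → Fin q), (∀ v ∈ vbl j, σ v = τ v) → (viol j σ ↔ viol j τ))
    {T : Finset (Fin m)} (hT : ∀ C ∈ T, ∀ C' ∈ T, C ≠ C' → Disjoint (vbl C) (vbl C'))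
    (h : ℕ) :
    ∑ ω, ∏ C ∈ T, condP viol C (greedyRun vbl viol p' ω (h + 1)).1
      = ∑ ω, ∏ C ∈ T, condP viol C (greedyRun vbl viol p' ω h).1 := by
  rcases le_or_gt n h with hh | hh
  · simp only [greedyRun_succ_of_le _ _ _ _ hh]
  have hstep : ∀ ω : Fin n → Fin q,
      ∑ a, ∏ C ∈ T, condP viol C (greedyRun vbl viol p' (update ω ⟨h, hh⟩ a) (h + 1)).1
        = q * ∏ C ∈ T, condP viol C (greedyRun vbl viol p' ω h).1 := by
    intro ω
    have hrun : ∀ a, greedyRun vbl viol p' (update ω ⟨h, hh⟩ a) h = greedyRun vbl viol p' ω h :=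
      fun a => greedyRun_congr _ _ _ fun v hv => update_of_ne (Fin.ne_of_lt hv) a ω
    simp only [greedyRun_succ_of_lt _ _ _ _ hh, hrun]
    exact sum_prod_condP_greedyStep vbl viol p' hq hdep hT
      (greedyRun_fst_eq_none _ _ _ _ le_rfl) ω
  refine mul_left_cancel₀ (Nat.cast_ne_zero.mpr hq : (q : ℝ) ≠ 0) ?_
  have hseed := sum_sum_update
    (fun ω => ∏ C ∈ T, condP viol C (greedyRun vbl viol p' ω (h + 1)).1) ⟨h, hh⟩
  rw [Fintype.card_fin] at hseed
  rw [← hseed, mul_sum]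
  exact sum_congr rfl fun ω _ => hstep ω

theorem sum_prod_condP_greedyRun (hq : q ≠ 0)
    (hdep : ∀ j (σ τ : Fin n → Fin q), (∀ v ∈ vbl j, σ v = τ v) → (viol j σ ↔ viol j τ))
    {T : Finset (Fin m)} (hT : ∀ C ∈ T, ∀ C' ∈ T, C ≠ C' → Disjoint (vbl C) (vbl C'))
    (h : ℕ) :
    ∑ ω, ∏ C ∈ T, condP viol C (greedyRun vbl viol p' ω h).1
      = (q : ℝ) ^ n * ∏ C ∈ T, condP viol C (fun _ => none) := by
  induction h with
  | zero => simp [greedyRun]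
  | succ h ih => rw [sum_prod_condP_greedyRun_succ vbl viol p' hq hdep hT, ih]

end Greedy

theorem greedy_expectation_product_le_general {n q m : ℕ} (hq : 0 < q)
    (vbl : Fin m → Finset (Fin n)) (viol : Fin m → (Fin n → Fin q) → Prop)
    (hdep : ∀ j (σ τ : Fin n → Fin q), (∀ v ∈ vbl j, σ v = τ v) → (viol j σ ↔ viol j τ))
    (p' : ℝ)
    (p : ℝ)
    (hp : ∀ j, condP viol j (fun _ => none) ≤ p)
    (T : Finset (Fin m))
    (hT : ∀ C ∈ T, ∀ C' ∈ T, C ≠ C' → Disjoint (vbl C) (vbl C')) :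
    (∑ ω : Fin n → Fin q, ∏ C ∈ T, condP viol C (greedyRun vbl viol p' ω n).1)
        / (q : ℝ) ^ n
      ≤ p ^ T.card := by
  rw [sum_prod_condP_greedyRun vbl viol p' hq.ne' hdep hT n,
    mul_div_cancel_left₀ _ (pow_ne_zero n (Nat.cast_ne_zero.mpr hq.ne'))]
  calc ∏ C ∈ T, condP viol C (fun _ => none) ≤ ∏ _C ∈ T, p :=
        prod_le_prod (fun C _ => condP_nonneg viol C _) fun C _ => hp C
    _ = p ^ T.card := prod_const p

/-- If `ℙ[C] ≤ p` for every constraint `C` and `T` is a collection of constraints with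
pairwise disjoint variable sets, then `E_ν[ ∏_{C ∈ T} ℙ[C | P_s] ] ≤ p^|T|`, where `ν` is
the distribution of the final partial assignment `P_s` of the randomized greedy freezing
procedure, realized here as `(greedyRun vbl viol p' ω n).1` for a uniformly random seed
`ω : Fin n → Fin q`. -/
theorem greedy_expectation_product_le {n q m : ℕ} (hq : 0 < q)
    (vbl : Fin m → Finset (Fin n)) (viol : Fin m → (Fin n → Fin q) → Prop)
    (hdep : ∀ j (σ τ : Fin n → Fin q), (∀ v ∈ vbl j, σ v = τ v) → (viol j σ ↔ viol j τ))
    (p' : ℝ) (hp' : p' ∈ Set.Ioo (0 : ℝ) 1)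
    (p : ℝ) (hp0 : 0 ≤ p)
    (hp : ∀ j, condP viol j (fun _ => none) ≤ p)
    (T : Finset (Fin m))
    (hT : ∀ C ∈ T, ∀ C' ∈ T, C ≠ C' → Disjoint (vbl C) (vbl C')) :
    (∑ ω : Fin n → Fin q, ∏ C ∈ T, condP viol C (greedyRun vbl viol p' ω n).1)
        / (q : ℝ) ^ n
      ≤ p ^ T.card :=
  greedy_expectation_product_le_general hq vbl viol hdep p' p hp T hT
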